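/- arXiv:2203.01599 — 2 statements merged into one kernel-verified Lean document; each statement's English description precedes it below -/
import Mathlib

section
/- Let d = 2^ℓ, let f : ℝ → ℝ be 1-Lipschitz, let S, T ⊆ [d] be disjoint with S nonempty, let t ∈ ℝ, and let z ∈ ℝ^d satisfy ‖z‖ ≤ 1, z_i = 0 for i ∉ S∪T, and (1/2)|z_j| ≤ |z_i| ≤ 2|z_j| for all i, j ∈ S (so |z_i| ≤ 2/√|S| for i ∈ S). Fix all diagonal entries D^j_{ii} for i ∉ S. Then, viewed as a function of the m|S| variables V_S = {D^j_{ii} : j ∈ [m], i ∈ S}, the map V_S ↦ F_{S∪T, t}(z) is Lipschitz with constant 2/√(m|S|) with respect to the Euclidean norm on ℝ^{m|S|}. -/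
open MeasureTheory ProbabilityTheory Real
open scoped ENNReal NNReal Classical

noncomputable section

/-- The Sylvester–Hadamard matrix of size `2^ℓ`: `H 0 = [1]`,
`H (ℓ+1) = [[H ℓ, H ℓ],[H ℓ, -H ℓ]]`. -/
def Had : ∀ ℓ : ℕ, Matrix (Fin (2 ^ ℓ)) (Fin (2 ^ ℓ)) ℝ
  | 0 => 1
  | (ℓ + 1) =>
      Matrix.reindex (finSumFinEquiv.trans (finCongr (by rw [pow_succ, mul_two])))
        (finSumFinEquiv.trans (finCongr (by rw [pow_succ, mul_two])))
        (Matrix.fromBlocks (Had ℓ) (Had ℓ) (Had ℓ) (-(Had ℓ)))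

/-- `rht ℓ m D z j k = (H_d D^j z)_k`, the `(j,k)` entry of the randomized Hadamard
transform of `z`, where `D j` records the diagonal entries of the diagonal matrix `D^j`. -/
def rht (ℓ m : ℕ) (D : Fin m → Fin (2 ^ ℓ) → ℝ) (z : EuclideanSpace ℝ (Fin (2 ^ ℓ)))
    (j : Fin m) (k : Fin (2 ^ ℓ)) : ℝ :=
  (Had ℓ).mulVec (fun i => D j i * z i) k

/-- The joint law of the diagonal entries of `D^1, …, D^m`: i.i.d. standard Gaussians. -/
def diagMeasure (ℓ m : ℕ) : Measure (Fin m → Fin (2 ^ ℓ) → ℝ) :=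
  Measure.pi fun _ => Measure.pi fun _ => gaussianReal 0 1

/-- `ρ = (ε/(10d))³`. -/
def rhoC (ℓ : ℕ) (ε : ℝ) : ℝ := (ε / (10 * 2 ^ ℓ)) ^ 3

/-- `λ = (10√(log(d/ε)))⁶`. -/
def lamC (ℓ : ℕ) (ε : ℝ) : ℝ := (10 * Real.sqrt (Real.log (2 ^ ℓ / ε))) ^ 6

/-- `γ = (10√(log(d/ε)))³`. -/
def gamC (ℓ : ℕ) (ε : ℝ) : ℝ := (10 * Real.sqrt (Real.log (2 ^ ℓ / ε))) ^ 3

/-- `ν = ε/(256 log(d/ε))`. -/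
def nuC (ℓ : ℕ) (ε : ℝ) : ℝ := ε / (256 * Real.log (2 ^ ℓ / ε))

/-- `r = 32 log(d/ε)`. -/
def rC (ℓ : ℕ) (ε : ℝ) : ℝ := 32 * Real.log (2 ^ ℓ / ε)

/-- `ζ = (ε/(10d))³`. -/
def zetaC (ℓ : ℕ) (ε : ℝ) : ℝ := (ε / (10 * 2 ^ ℓ)) ^ 3

/-- The grid `𝒯 = {± i·ζ : i = 0, …, ⌊λ/ζ⌋}`. -/
def TGrid (ℓ : ℕ) (ε : ℝ) : Set ℝ :=
  {t | ∃ i : ℕ, (i : ℝ) ≤ lamC ℓ ε / zetaC ℓ ε ∧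
    (t = (i : ℝ) * zetaC ℓ ε ∨ t = -((i : ℝ) * zetaC ℓ ε))}

/-- `z_S`: the vector `z` with the entries outside `S` set to `0`. -/
def restr (ℓ : ℕ) (S : Finset (Fin (2 ^ ℓ))) (z : EuclideanSpace ℝ (Fin (2 ^ ℓ))) :
    EuclideanSpace ℝ (Fin (2 ^ ℓ)) :=
  WithLp.toLp 2 (fun i => if i ∈ S then z i else 0)

/-- `F_{S,t}(z) = (1/(md)) ∑_{j,k} f(h̃_{j,k}(z_S) − t)`, as a function of the
diagonal entries `D`. -/
def Frht (ℓ m : ℕ) (f : ℝ → ℝ) (S : Finset (Fin (2 ^ ℓ))) (t : ℝ)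
    (z : EuclideanSpace ℝ (Fin (2 ^ ℓ))) (D : Fin m → Fin (2 ^ ℓ) → ℝ) : ℝ :=
  (1 / ((m : ℝ) * 2 ^ ℓ)) * ∑ j, ∑ k, f (rht ℓ m D (restr ℓ S z) j k - t)

/-- `F̃_{S,T,t}(z) = E[F_{S∪T,t}(z) | V_T]`: by independence of the Gaussian diagonal
entries, the conditional expectation given the entries indexed by `T` is obtained by
keeping the entries in `T` and integrating out fresh copies of all remaining entries. -/
def Ftil (ℓ m : ℕ) (f : ℝ → ℝ) (S T : Finset (Fin (2 ^ ℓ))) (t : ℝ)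
    (z : EuclideanSpace ℝ (Fin (2 ^ ℓ))) (D : Fin m → Fin (2 ^ ℓ) → ℝ) : ℝ :=
  ∫ D', Frht ℓ m f (S ∪ T) t z (fun j i => if i ∈ T then D j i else D' j i)
    ∂(diagMeasure ℓ m)

/-- The set `G_{S,T}` of unit-ball vectors supported on `S ∪ T` whose entries on `S`
are within a factor `2` of each other. -/
def GST (ℓ : ℕ) (S T : Finset (Fin (2 ^ ℓ))) : Set (EuclideanSpace ℝ (Fin (2 ^ ℓ))) :=
  {z | ‖z‖ ≤ 1 ∧ (∀ i, i ∉ S ∪ T → z i = 0) ∧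
    ∀ i ∈ S, ∀ j ∈ S, (1 / 2) * |z j| ≤ |z i| ∧ |z i| ≤ 2 * |z j|}

/-- `Gnet` is an admissible family of `ρ`-nets: for all disjoint `S, T` with
`|T| ≤ r·|S|`, `Gnet S T` is a `ρ`-net of `G_{S,T}` of size at most `(10/ρ)^{(r+1)|S|}`. -/
def IsNetFamily (ℓ : ℕ) (ε : ℝ)
    (Gnet : Finset (Fin (2 ^ ℓ)) → Finset (Fin (2 ^ ℓ)) →
      Finset (EuclideanSpace ℝ (Fin (2 ^ ℓ)))) : Prop :=
  ∀ S T : Finset (Fin (2 ^ ℓ)), Disjoint S T → (T.card : ℝ) ≤ rC ℓ ε * S.card →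
    ↑(Gnet S T) ⊆ GST ℓ S T ∧
    (∀ w ∈ GST ℓ S T, ∃ w' ∈ Gnet S T, ‖w - w'‖ ≤ rhoC ℓ ε) ∧
    ((Gnet S T).card : ℝ) ≤ (10 / rhoC ℓ ε) ^ ((rC ℓ ε + 1) * (S.card : ℝ))

section AuxHad

open Matrix

lemma had_transpose_mul (ℓ : ℕ) : (Had ℓ)ᵀ * Had ℓ = (2 ^ ℓ : ℝ) • 1 := by
  induction ℓ with
  | zero => simp [Had]
  | succ ℓ ih =>
    rw [Had]
    simp only [Matrix.reindex_apply, Matrix.transpose_submatrix, Matrix.submatrix_mul_equiv]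
    rw [Matrix.fromBlocks_transpose, Matrix.fromBlocks_multiply]
    simp only [ih, Matrix.transpose_neg, Matrix.neg_mul, Matrix.mul_neg, neg_neg]
    have hb : Matrix.fromBlocks ((2^ℓ:ℝ)•(1:Matrix (Fin (2^ℓ)) (Fin (2^ℓ)) ℝ) + (2^ℓ:ℝ)•1)
        ((2^ℓ:ℝ)•1 + -((2^ℓ:ℝ)•1)) ((2^ℓ:ℝ)•1 + -((2^ℓ:ℝ)•1)) ((2^ℓ:ℝ)•1 + (2^ℓ:ℝ)•1)
        = ((2^(ℓ+1):ℝ) • 1 : Matrix (Fin (2^ℓ) ⊕ Fin (2^ℓ)) (Fin (2^ℓ) ⊕ Fin (2^ℓ)) ℝ) := by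
      rw [add_neg_cancel, ← add_smul]
      have h2 : (2:ℝ)^ℓ + 2^ℓ = 2^(ℓ+1) := by ring
      rw [h2]
      ext i j
      rcases i with i | i <;> rcases j with j | j <;>
        simp [Matrix.one_apply, Matrix.fromBlocks]
    rw [hb]
    ext i j
    simp [Matrix.submatrix_apply, Matrix.one_apply, Equiv.eq_symm_apply]

lemma had_parseval (ℓ : ℕ) (u : Fin (2 ^ ℓ) → ℝ) :
    ∑ k, ((Had ℓ).mulVec u k) ^ 2 = 2 ^ ℓ * ∑ i, (u i) ^ 2 := by
  have h1 : ∑ k, ((Had ℓ).mulVec u k) ^ 2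
      = (Had ℓ).mulVec u ⬝ᵥ (Had ℓ).mulVec u := by
    simp [dotProduct, sq]
  rw [h1, Matrix.dotProduct_mulVec, Matrix.vecMul_mulVec, had_transpose_mul]
  simp only [dotProduct, Finset.mul_sum]
  refine Finset.sum_congr rfl fun x _ => ?_
  simp [Matrix.vecMul, dotProduct, Matrix.smul_apply, Matrix.one_apply, mul_ite,
    Finset.sum_ite_eq]
  ring

lemma sum_abs_mulVec_le (ℓ : ℕ) (u : Fin (2 ^ ℓ) → ℝ) :
    ∑ k, |(Had ℓ).mulVec u k| ≤ 2 ^ ℓ * Real.sqrt (∑ i, (u i) ^ 2) := by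
  have h1 : (∑ k, |(Had ℓ).mulVec u k|) ^ 2 ≤ ((2:ℝ) ^ ℓ) ^ 2 * ∑ i, (u i) ^ 2 := by
    calc (∑ k, |(Had ℓ).mulVec u k|) ^ 2
        ≤ (Finset.univ.card : ℝ) * ∑ k, |(Had ℓ).mulVec u k| ^ 2 :=
          sq_sum_le_card_mul_sum_sq
      _ = (2:ℝ)^ℓ * ∑ k, ((Had ℓ).mulVec u k) ^ 2 := by
          simp [sq_abs, Finset.card_univ]
      _ = ((2:ℝ) ^ ℓ) ^ 2 * ∑ i, (u i) ^ 2 := by rw [had_parseval]; ring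
  have h0 : (0:ℝ) ≤ ∑ k, |(Had ℓ).mulVec u k| := Finset.sum_nonneg fun _ _ => abs_nonneg _
  calc ∑ k, |(Had ℓ).mulVec u k|
      = Real.sqrt ((∑ k, |(Had ℓ).mulVec u k|) ^ 2) := (Real.sqrt_sq h0).symm
    _ ≤ Real.sqrt (((2:ℝ) ^ ℓ) ^ 2 * ∑ i, (u i) ^ 2) := Real.sqrt_le_sqrt h1
    _ = 2 ^ ℓ * Real.sqrt (∑ i, (u i) ^ 2) := by
        rw [Real.sqrt_mul (by positivity), Real.sqrt_sq (by positivity)]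

lemma final_alg (mr cr dr N : ℝ) (hm : 0 < mr) (hc : 0 < cr) (hd : 0 < dr) (hN : 0 ≤ N) :
    1 / (mr * dr) * (dr * Real.sqrt (mr * (4 / cr * N ^ 2))) = 2 / Real.sqrt (mr * cr) * N := by
  rw [show mr * (4 / cr * N ^ 2) = (2 * N) ^ 2 * (mr / cr) by ring]
  rw [Real.sqrt_mul (by positivity), Real.sqrt_sq (by positivity),
    Real.sqrt_div hm.le, Real.sqrt_mul hm.le]
  have hsm : Real.sqrt mr * Real.sqrt mr = mr := Real.mul_self_sqrt hm.le
  have h1 : Real.sqrt mr ≠ 0 := ne_of_gt (Real.sqrt_pos.mpr hm)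
  have h2 : Real.sqrt cr ≠ 0 := ne_of_gt (Real.sqrt_pos.mpr hc)
  field_simp
  linear_combination N * hsm

end AuxHad

set_option maxHeartbeats 1000000 in
/-- from the proof of Claim 3.1: fixing all off-`S` diagonal
entries, `F_{S∪T,t}(z)` is a `2/√(m|S|)`-Lipschitz function of the variables
`V_S = {D^j_{ii} : j ∈ [m], i ∈ S}` in the Euclidean norm on `ℝ^{m|S|}`. -/



theorem F_lipschitz_in_VS
    (ℓ m : ℕ) (f : ℝ → ℝ) (hf : LipschitzWith 1 f)
    (S T : Finset (Fin (2 ^ ℓ))) (hST : Disjoint S T) (hS : S.Nonempty)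
    (t : ℝ) (z : EuclideanSpace ℝ (Fin (2 ^ ℓ)))
    (hz : ‖z‖ ≤ 1) (hz0 : ∀ i, i ∉ S ∪ T → z i = 0)
    (hzS : ∀ i ∈ S, ∀ j ∈ S, (1 / 2) * |z j| ≤ |z i| ∧ |z i| ≤ 2 * |z j|)
    (D0 : Fin m → Fin (2 ^ ℓ) → ℝ) :
    ∀ V V' : EuclideanSpace ℝ (Fin m × {i // i ∈ S}),
      |Frht ℓ m f (S ∪ T) t z
          (fun j i => if h : i ∈ S then V (j, ⟨i, h⟩) else D0 j i) -
        Frht ℓ m f (S ∪ T) t z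
          (fun j i => if h : i ∈ S then V' (j, ⟨i, h⟩) else D0 j i)| ≤
      2 / Real.sqrt ((m : ℝ) * S.card) * ‖V - V'‖ := by
  intro V V'
  rcases Nat.eq_zero_or_pos m with hm | hm
  · subst hm
    simp [Frht]
  have hc : 0 < S.card := Finset.card_pos.mpr hS
  have hmR : (0:ℝ) < m := by exact_mod_cast hm
  have hcR : (0:ℝ) < (S.card : ℝ) := by exact_mod_cast hc
  have hdR : (0:ℝ) < (2:ℝ) ^ ℓ := by positivity
  set D1 : Fin m → Fin (2 ^ ℓ) → ℝ :=
    fun j i => if h : i ∈ S then V (j, ⟨i, h⟩) else D0 j i with hD1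
  set D2 : Fin m → Fin (2 ^ ℓ) → ℝ :=
    fun j i => if h : i ∈ S then V' (j, ⟨i, h⟩) else D0 j i with hD2
  set Δ : Fin m → Fin (2 ^ ℓ) → ℝ :=
    fun j i => if h : i ∈ S then (V (j, ⟨i, h⟩) - V' (j, ⟨i, h⟩)) * z i else 0 with hΔ
  -- pointwise difference of the transforms
  have key : ∀ j k, rht ℓ m D1 (restr ℓ (S ∪ T) z) j k - rht ℓ m D2 (restr ℓ (S ∪ T) z) j k
      = (Had ℓ).mulVec (Δ j) k := by
    intro j k
    show ((Had ℓ).mulVec _ - (Had ℓ).mulVec _) k = _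
    rw [← Matrix.mulVec_sub]
    congr 1
    funext i
    by_cases hi : i ∈ S
    · have hiu : i ∈ S ∪ T := Finset.mem_union_left _ hi
      simp only [Pi.sub_apply, hD1, hD2, hΔ, dif_pos hi, restr, WithLp.ofLp_toLp, if_pos hiu]
      ring
    · simp only [Pi.sub_apply, hD1, hD2, hΔ, dif_neg hi, restr, WithLp.ofLp_toLp]
      ring
  -- Lipschitz bound on f
  have hfl : ∀ x y : ℝ, |f x - f y| ≤ |x - y| := by
    intro x y
    have := hf.dist_le_mul x y
    simpa [Real.dist_eq] using this
  -- squared ℓ² masses per j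
  set s : Fin m → ℝ := fun j => ∑ i, (Δ j i) ^ 2 with hs
  have hs0 : ∀ j, 0 ≤ s j := fun j => Finset.sum_nonneg fun _ _ => sq_nonneg _
  -- entry bound on z over S
  have hzsum : ∑ i ∈ S, (z i) ^ 2 ≤ 1 := by
    have hn : ‖z‖ ^ 2 = ∑ i, (z i) ^ 2 := by
      rw [EuclideanSpace.norm_eq, Real.sq_sqrt (by positivity)]
      simp [sq_abs]
    have h1 : ∑ i ∈ S, (z i) ^ 2 ≤ ∑ i, (z i) ^ 2 :=
      Finset.sum_le_sum_of_subset_of_nonneg (Finset.subset_univ S)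
        (fun _ _ _ => sq_nonneg _)
    have h2 : ‖z‖ ^ 2 ≤ 1 := by
      have := mul_le_mul hz hz (norm_nonneg z) zero_le_one
      simpa [sq] using this
    linarith [hn ▸ h2]
  have hz2 : ∀ i ∈ S, (z i) ^ 2 ≤ 4 / S.card := by
    intro i hi
    have hterm : ∀ i' ∈ S, (z i) ^ 2 / 4 ≤ (z i') ^ 2 := by
      intro i' hi'
      have h := (hzS i hi i' hi').2
      have h2 : (z i) ^ 2 ≤ (2 * |z i'|) ^ 2 := by
        have := sq_le_sq' (by linarith [abs_nonneg (z i), h]) h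
        simpa [sq_abs] using this
      nlinarith [sq_abs (z i'), sq_nonneg (z i')]
    have hsum : (S.card : ℝ) * ((z i) ^ 2 / 4) ≤ ∑ i' ∈ S, (z i') ^ 2 := by
      calc (S.card : ℝ) * ((z i) ^ 2 / 4) = ∑ _i' ∈ S, (z i) ^ 2 / 4 := by
            rw [Finset.sum_const, nsmul_eq_mul]
        _ ≤ ∑ i' ∈ S, (z i') ^ 2 := Finset.sum_le_sum hterm
    have hle : (S.card : ℝ) * ((z i) ^ 2 / 4) ≤ 1 := le_trans hsum hzsum
    rw [le_div_iff₀ hcR]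
    nlinarith
  -- norm of V - V'
  set N : ℝ := ‖V - V'‖ with hN
  have hNn : 0 ≤ N := norm_nonneg _
  have hNsq : N ^ 2 = ∑ j, ∑ p ∈ S.attach, (V (j, p) - V' (j, p)) ^ 2 := by
    rw [hN, EuclideanSpace.norm_eq, Real.sq_sqrt (by positivity)]
    rw [Fintype.sum_prod_type]
    refine Finset.sum_congr rfl fun j _ => ?_
    rw [← Finset.univ_eq_attach]
    refine Finset.sum_congr rfl fun p _ => ?_
    simp [sq_abs]
  -- bound on the total mass
  have hmass : ∑ j, s j ≤ 4 / S.card * N ^ 2 := by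
    rw [hNsq, Finset.mul_sum]
    refine Finset.sum_le_sum fun j _ => ?_
    have hrestr : s j = ∑ p ∈ S.attach, ((V (j, p) - V' (j, p)) * z p) ^ 2 := by
      have h1 : s j = ∑ i ∈ S, (Δ j i) ^ 2 := by
        rw [hs]
        refine (Finset.sum_subset (Finset.subset_univ S) fun i _ hi => ?_).symm
        simp [hΔ, dif_neg hi]
      rw [h1, ← Finset.sum_attach S (fun i => (Δ j i) ^ 2)]
      refine Finset.sum_congr rfl fun p _ => ?_
      simp [hΔ, dif_pos p.2]
    rw [hrestr]
    calc ∑ p ∈ S.attach, ((V (j, p) - V' (j, p)) * z p) ^ 2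
        ≤ ∑ p ∈ S.attach, (V (j, p) - V' (j, p)) ^ 2 * (4 / S.card) := by
          refine Finset.sum_le_sum fun p _ => ?_
          rw [mul_pow]
          exact mul_le_mul_of_nonneg_left (hz2 p p.2) (sq_nonneg _)
      _ = 4 / S.card * ∑ p ∈ S.attach, (V (j, p) - V' (j, p)) ^ 2 := by
          rw [← Finset.sum_mul, mul_comm]
  -- step 1: Lipschitz of f entrywise
  have hstep1 : |Frht ℓ m f (S ∪ T) t z D1 - Frht ℓ m f (S ∪ T) t z D2|
      ≤ 1 / ((m:ℝ) * 2 ^ ℓ) * ∑ j, ∑ k, |(Had ℓ).mulVec (Δ j) k| := by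
    simp only [Frht]
    rw [← mul_sub, abs_mul,
      abs_of_nonneg (by positivity : (0:ℝ) ≤ 1 / ((m:ℝ) * 2 ^ ℓ))]
    refine mul_le_mul_of_nonneg_left ?_ (by positivity)
    rw [← Finset.sum_sub_distrib]
    refine (Finset.abs_sum_le_sum_abs _ _).trans ?_
    refine Finset.sum_le_sum fun j _ => ?_
    rw [← Finset.sum_sub_distrib]
    refine (Finset.abs_sum_le_sum_abs _ _).trans ?_
    refine Finset.sum_le_sum fun k _ => ?_
    refine (hfl _ _).trans ?_
    have : rht ℓ m D1 (restr ℓ (S ∪ T) z) j k - t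
        - (rht ℓ m D2 (restr ℓ (S ∪ T) z) j k - t)
        = (Had ℓ).mulVec (Δ j) k := by
      rw [← key j k]; ring
    rw [this]
  -- step 2: row sums via Parseval
  have hstep2 : ∑ j, ∑ k, |(Had ℓ).mulVec (Δ j) k| ≤ 2 ^ ℓ * ∑ j, Real.sqrt (s j) := by
    rw [Finset.mul_sum]
    exact Finset.sum_le_sum fun j _ => sum_abs_mulVec_le ℓ (Δ j)
  -- step 3: Cauchy–Schwarz over j
  have hstep3 : ∑ j, Real.sqrt (s j) ≤ Real.sqrt ((m:ℝ) * (4 / S.card * N ^ 2)) := by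
    have h1 : (∑ j, Real.sqrt (s j)) ^ 2 ≤ (m:ℝ) * ∑ j, s j := by
      calc (∑ j, Real.sqrt (s j)) ^ 2
          ≤ (Finset.univ.card : ℝ) * ∑ j, Real.sqrt (s j) ^ 2 := sq_sum_le_card_mul_sum_sq
        _ = (m:ℝ) * ∑ j, s j := by
            rw [Finset.card_univ, Fintype.card_fin]
            congr 1
            exact Finset.sum_congr rfl fun j _ => Real.sq_sqrt (hs0 j)
    have h0 : 0 ≤ ∑ j, Real.sqrt (s j) := Finset.sum_nonneg fun j _ => Real.sqrt_nonneg _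
    calc ∑ j, Real.sqrt (s j)
        = Real.sqrt ((∑ j, Real.sqrt (s j)) ^ 2) := (Real.sqrt_sq h0).symm
      _ ≤ Real.sqrt ((m:ℝ) * ∑ j, s j) := Real.sqrt_le_sqrt h1
      _ ≤ Real.sqrt ((m:ℝ) * (4 / S.card * N ^ 2)) :=
          Real.sqrt_le_sqrt (mul_le_mul_of_nonneg_left hmass (by positivity))
  -- final algebra
  have hfinal : 1 / ((m:ℝ) * 2 ^ ℓ) * (2 ^ ℓ * Real.sqrt ((m:ℝ) * (4 / S.card * N ^ 2)))
      = 2 / Real.sqrt ((m:ℝ) * S.card) * N :=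
    final_alg _ _ _ _ hmR hcR hdR hNn
  calc |Frht ℓ m f (S ∪ T) t z D1 - Frht ℓ m f (S ∪ T) t z D2|
      ≤ 1 / ((m:ℝ) * 2 ^ ℓ) * ∑ j, ∑ k, |(Had ℓ).mulVec (Δ j) k| := hstep1
    _ ≤ 1 / ((m:ℝ) * 2 ^ ℓ) * (2 ^ ℓ * ∑ j, Real.sqrt (s j)) :=
        mul_le_mul_of_nonneg_left hstep2 (by positivity)
    _ ≤ 1 / ((m:ℝ) * 2 ^ ℓ) * (2 ^ ℓ * Real.sqrt ((m:ℝ) * (4 / S.card * N ^ 2))) := by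
        refine mul_le_mul_of_nonneg_left ?_ (by positivity)
        exact mul_le_mul_of_nonneg_left hstep3 (by positivity)
    _ = 2 / Real.sqrt ((m:ℝ) * S.card) * N := hfinal
end
end

section
/- Let d = 2^ℓ, let δ ∈ (0, 1/2), set α = Φ(3) and β = φ(4), let x, x_1, …, x_n ∈ ℝ^d, and let y = h̃(x), y_i = h̃(x_i) for a fixed realization of the diagonal matrices. Suppose this realization satisfies: for every z ∈ ℝ^d with ‖z‖ = 1, (1/(md)) Σ_{p,q} 1{h̃_{p,q}(z) ≤ 2} ≤ α − β/4 and (1/(md)) Σ_{p,q} 1{h̃_{p,q}(z) ≤ 4} ≥ α + β/4. Let l_1, …, l_k be i.i.d. uniform on [md]. There is an absolute constant C > 0 such that if k ≥ C β⁻²(log n + log(1/δ)), then with probability at least 1 − δ/4 over the indices l_1, …, l_k, for every i ∈ [n]: 2‖x − x_i‖ ≤ quant_α({y_{l_p} − (y_i)_{l_p}}_{p∈[k]}) ≤ 4‖x − x_i‖. -/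
open MeasureTheory ProbabilityTheory Real
open scoped ENNReal NNReal Classical

noncomputable section

/-- For `α ∈ (0,1)` and a finite family `v : ι → ℝ`, `quant α v` is the α-th quantile:
the smallest value `s` of the family such that at least an `α` fraction of the family
is `≤ s`. -/
def quant {ι : Type*} [Fintype ι] (α : ℝ) (v : ι → ℝ) : ℝ :=
  sInf {s | s ∈ Set.range v ∧
    α * (Fintype.card ι : ℝ) ≤ ((Finset.univ.filter fun p => v p ≤ s).card : ℝ)}

/-- `Φ(3)`, where `Φ` is the standard Gaussian CDF. -/
def gaussAlpha : ℝ := ((gaussianReal 0 1) (Set.Iic (3 : ℝ))).toReal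

/-- `φ(4)`, where `φ` is the standard Gaussian density. -/
def gaussBeta : ℝ := gaussianPDFReal 0 1 4

/-- Uniform distribution over the `m·d` indices (as pairs `(j,k)`). -/
def unifIndex (ℓ m : ℕ) : Measure (Fin m × Fin (2 ^ ℓ)) :=
  ((m * 2 ^ ℓ : ℕ) : ℝ≥0∞)⁻¹ • Measure.count

/-- The joint law of `k` i.i.d. uniform indices in `[md]`. -/
def indexMeasure (ℓ m k : ℕ) : Measure (Fin k → Fin m × Fin (2 ^ ℓ)) :=
  Measure.pi fun _ => unifIndex ℓ m

/-! Fix `i` with `x ≠ xᵢ` and let `z = (x - xᵢ) / ‖x - xᵢ‖`. The transform is linear and quantiles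
commute with positive scalings, so the estimate for `i` says that the `α`-quantile of `k` uniform
samples of the coordinates of `h̃(z)` lies in `[2, 4]`. This can only fail if at least `αk` samples
are `≤ 2` or fewer than `αk` are `≤ 4`. The population fractions of these events are at most
`α - β/4` and at least `α + β/4`, so by Hoeffding's inequality each has probability at most
`exp(-kβ²/8)`. A union bound over the `n` points, with `k ≥ 32 β⁻² (log n + log (1/δ))`, bounds the
total failure probability by `δ/4`. -/

open Finset

section Hoeffding

variable {Ω : Type*} [MeasurableSpace Ω] {ν : Measure Ω} [IsProbabilityMeasure ν] {A : Set Ω}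

lemma hasSubgaussianMGF_indicator_sub (hA : MeasurableSet A) :
    HasSubgaussianMGF (fun ω => (if ω ∈ A then 1 else 0 : ℝ) - ν.real A) (1 / 4) ν := by
  have h := hasSubgaussianMGF_of_mem_Icc (μ := ν) (a := 0) (b := 1)
    (X := fun ω => if ω ∈ A then (1 : ℝ) else 0)
    (Measurable.ite hA measurable_const measurable_const).aemeasurable
    (ae_of_all _ fun ω => by split_ifs <;> simp)
  have hmean : ∫ ω, (if ω ∈ A then (1 : ℝ) else 0) ∂ν = ν.real A := by
    rw [← integral_indicator_one hA]; rfl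
  convert h using 2
  · rw [hmean]
  · norm_num

lemma measureReal_pi_le_card_le (hA : MeasurableSet A) (k : ℕ) {t : ℝ} (ht : 0 ≤ t) :
    (Measure.pi fun _ : Fin k => ν).real {L | (ν.real A + t) * k ≤ #{p | L p ∈ A}} ≤
      exp (-2 * k * t ^ 2) := by
  set X : Ω → ℝ := fun ω => (if ω ∈ A then 1 else 0 : ℝ) - ν.real A
  have hX : Measurable X := (Measurable.ite hA measurable_const measurable_const).sub_const _
  have h_indep : iIndepFun (fun (p : Fin k) L => X (L p)) (Measure.pi fun _ => ν) :=
    iIndepFun_pi fun _ => hX.aemeasurable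
  have h_subG : ∀ p ∈ (univ : Finset (Fin k)),
      HasSubgaussianMGF (fun L => X (L p)) (1 / 4) (Measure.pi fun _ => ν) := fun p _ =>
    HasSubgaussianMGF.of_map (measurable_pi_apply p).aemeasurable
      (by rw [(measurePreserving_eval (fun _ => ν) p).map_eq]
          exact hasSubgaussianMGF_indicator_sub hA)
  have hsum : ∀ L : Fin k → Ω, ∑ p, X (L p) = #{p | L p ∈ A} - k * ν.real A := by
    intro L
    simp [X, sum_sub_distrib, sum_boole]
  calc _ ≤ (Measure.pi fun _ : Fin k => ν).real {L | t * k ≤ ∑ p, X (L p)} := by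
        refine measureReal_mono fun L hL => ?_
        simp only [Set.mem_ofPred_eq, hsum] at hL ⊢
        linarith
    _ ≤ exp (-(t * k) ^ 2 / (2 * ((∑ p : Fin k, (1 / 4 : ℝ≥0) : ℝ≥0) : ℝ))) :=
        HasSubgaussianMGF.measure_sum_ge_le_of_iIndepFun h_indep h_subG (by positivity)
    _ = exp (-2 * k * t ^ 2) := by
        rcases Nat.eq_zero_or_pos k with rfl | hk
        · simp
        · congr 1
          simp only [sum_const, card_univ, Fintype.card_fin, nsmul_eq_mul, NNReal.coe_mul,
            NNReal.coe_natCast, one_div, NNReal.coe_inv, NNReal.coe_ofNat]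
          field_simp
          ring

lemma measureReal_pi_card_le_le (hA : MeasurableSet A) (k : ℕ) {t : ℝ} (ht : 0 ≤ t) :
    (Measure.pi fun _ : Fin k => ν).real {L | (#{p | L p ∈ A} : ℝ) ≤ (ν.real A - t) * k} ≤
      exp (-2 * k * t ^ 2) := by
  refine le_trans (measureReal_mono fun L hL => ?_) (measureReal_pi_le_card_le hA.compl k ht)
  have hcard := card_filter_add_card_filter_not (s := (univ : Finset (Fin k))) (L · ∈ A)
  rw [card_univ, Fintype.card_fin] at hcard
  have hcard' : (#{p | L p ∈ A} : ℝ) + #{p | L p ∉ A} = k := by exact_mod_cast hcard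
  simp only [Set.mem_ofPred_eq, Set.mem_compl_iff, probReal_compl_eq_one_sub hA] at hL ⊢
  linarith

end Hoeffding

section Quantile

variable {ι : Type*} [Fintype ι]

lemma quant_zero (a : ℝ) : quant a (fun _ : ι => (0 : ℝ)) = 0 := by
  have hsub : ∀ S : Set ℝ, S ⊆ {0} → sInf S = 0 := fun S hS => by
    rcases Set.subset_singleton_iff_eq.mp hS with rfl | rfl <;> simp
  exact hsub _ fun s ⟨⟨_, hs⟩, _⟩ => hs.symm

lemma quant_const_mul {c : ℝ} (hc : 0 < c) (a : ℝ) (w : ι → ℝ) :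
    quant a (fun p => c * w p) = c * quant a w := by
  rw [quant, quant, show ∀ r : ℝ, c * r = c • r from fun _ => rfl,
    ← Real.sInf_smul_of_nonneg hc.le]
  congr 1
  ext s
  simp only [Set.mem_smul_set_iff_inv_smul_mem₀ hc.ne', Set.mem_ofPred_eq, Set.mem_range,
    smul_eq_mul, eq_inv_mul_iff_mul_eq₀ hc.ne', le_inv_mul_iff₀ hc]

lemma quant_mem_Icc_of_card {a t₁ t₂ : ℝ} (w : ι → ℝ)
    (h₁ : (#{p | w p ≤ t₁} : ℝ) < a * Fintype.card ι)
    (h₂ : a * Fintype.card ι ≤ #{p | w p ≤ t₂}) :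
    quant a w ∈ Set.Icc t₁ t₂ := by
  set S := {s | s ∈ Set.range w ∧ a * (Fintype.card ι : ℝ) ≤ (#{p | w p ≤ s} : ℝ)}
  have hbdd : BddBelow S := ((Set.finite_range w).subset fun _ hs => hs.1).bddBelow
  have hne : ({p | w p ≤ t₂} : Finset ι).Nonempty := by
    rw [← card_pos]
    exact_mod_cast (Nat.cast_nonneg _).trans_lt (h₁.trans_le h₂)
  obtain ⟨p₁, hp₁, hmax⟩ := exists_max_image _ w hne
  have hp₁t : w p₁ ≤ t₂ := (mem_filter.mp hp₁).2
  have hp₁S : w p₁ ∈ S := by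
    refine ⟨⟨p₁, rfl⟩, h₂.trans ?_⟩
    exact_mod_cast card_le_card fun p hp => mem_filter.mpr ⟨mem_univ p, hmax p hp⟩
  refine ⟨le_csInf ⟨_, hp₁S⟩ fun s hs => ?_, (csInf_le hbdd hp₁S).trans hp₁t⟩
  by_contra! hst
  have hmono : (#{p | w p ≤ s} : ℝ) ≤ #{p | w p ≤ t₁} := by
    exact_mod_cast card_le_card fun p hp => by
      simp only [mem_filter] at hp ⊢
      exact ⟨hp.1, hp.2.trans hst.le⟩
  linarith [hs.2]

end Quantile

section Subsample

variable {Ω : Type*} [MeasurableSpace Ω] {ν : Measure Ω} [IsProbabilityMeasure ν]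

lemma measureReal_pi_quant_notMem_Icc_le {v : Ω → ℝ} (hv : Measurable v) {α β s₁ s₂ : ℝ}
    (hβ : 0 ≤ β) (h₁ : ν.real {ω | v ω ≤ s₁} ≤ α - β / 4)
    (h₂ : α + β / 4 ≤ ν.real {ω | v ω ≤ s₂}) (k : ℕ) :
    (Measure.pi fun _ : Fin k => ν).real {L | quant α (fun p => v (L p)) ∉ Set.Icc s₁ s₂} ≤
      2 * exp (-k * β ^ 2 / 8) := by
  set A₁ := {ω | v ω ≤ s₁}
  set A₂ := {ω | v ω ≤ s₂}
  have hk : (0 : ℝ) ≤ k := Nat.cast_nonneg k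
  have hsub : {L : Fin k → Ω | quant α (fun p => v (L p)) ∉ Set.Icc s₁ s₂} ⊆
      {L | (ν.real A₁ + β / 4) * k ≤ #{p | L p ∈ A₁}} ∪
        {L | (#{p | L p ∈ A₂} : ℝ) ≤ (ν.real A₂ - β / 4) * k} := by
    intro L hL
    by_contra! hgood
    simp only [Set.mem_union, Set.mem_ofPred_eq, not_or, not_le] at hgood
    refine hL (quant_mem_Icc_of_card _ ?_ ?_) <;> rw [Fintype.card_fin]
    · exact hgood.1.trans_le (by nlinarith)
    · exact ((by nlinarith : _ ≤ _).trans_lt hgood.2).le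
  have hexp : exp (-2 * k * (β / 4) ^ 2) = exp (-k * β ^ 2 / 8) := by congr 1; ring
  calc _ ≤ _ := measureReal_mono hsub
    _ ≤ _ := measureReal_union_le _ _
    _ ≤ exp (-k * β ^ 2 / 8) + exp (-k * β ^ 2 / 8) := by
        rw [← hexp]
        gcongr
        · exact measureReal_pi_le_card_le (measurableSet_le hv measurable_const) k (by positivity)
        · exact measureReal_pi_card_le_le (measurableSet_le hv measurable_const) k (by positivity)
    _ = 2 * exp (-k * β ^ 2 / 8) := by ring

end Subsample

section RandomizedHadamard

variable {ℓ m : ℕ}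

lemma isProbabilityMeasure_unifIndex (ℓ : ℕ) (hm : 0 < m) :
    IsProbabilityMeasure (unifIndex ℓ m) := by
  constructor
  rw [unifIndex, Measure.smul_apply, Measure.count_univ, smul_eq_mul, ENat.card_eq_coe_fintype_card,
    Fintype.card_prod, Fintype.card_fin, Fintype.card_fin]
  exact ENNReal.inv_mul_cancel (by positivity) (by simp [ENNReal.mul_eq_top])

lemma isProbabilityMeasure_indexMeasure (ℓ k : ℕ) (hm : 0 < m) :
    IsProbabilityMeasure (indexMeasure ℓ m k) := by
  have := isProbabilityMeasure_unifIndex ℓ hm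
  rw [indexMeasure]
  infer_instance

lemma measureReal_unifIndex_setOf (P : Fin m × Fin (2 ^ ℓ) → Prop) :
    (unifIndex ℓ m).real {ω | P ω} =
      1 / ((m : ℝ) * 2 ^ ℓ) * ∑ p, ∑ q, (if P (p, q) then (1 : ℝ) else 0) := by
  rw [← Fintype.sum_prod_type', Finset.sum_boole, unifIndex, ← coe_filter_univ,
    measureReal_ennreal_smul_apply, Measure.real, Measure.count_apply_finset]
  simp [ENNReal.toReal_inv]

lemma rht_sub (D : Fin m → Fin (2 ^ ℓ) → ℝ) (x y : EuclideanSpace ℝ (Fin (2 ^ ℓ))) (j : Fin m)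
    (q : Fin (2 ^ ℓ)) : rht ℓ m D (x - y) j q = rht ℓ m D x j q - rht ℓ m D y j q := by
  simp only [rht, PiLp.sub_apply, mul_sub]
  exact congrFun (Matrix.mulVec_sub _ _ _) q

lemma rht_smul (D : Fin m → Fin (2 ^ ℓ) → ℝ) (c : ℝ) (z : EuclideanSpace ℝ (Fin (2 ^ ℓ)))
    (j : Fin m) (q : Fin (2 ^ ℓ)) : rht ℓ m D (c • z) j q = c * rht ℓ m D z j q := by
  simp only [rht, PiLp.smul_apply, smul_eq_mul, mul_left_comm]
  exact congrFun (Matrix.mulVec_smul _ c _) q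

def RhtCdfBounds (ℓ m : ℕ) (D : Fin m → Fin (2 ^ ℓ) → ℝ) : Prop :=
  ∀ z : EuclideanSpace ℝ (Fin (2 ^ ℓ)), ‖z‖ = 1 →
    (1 / ((m : ℝ) * 2 ^ ℓ)) * ∑ p, ∑ q, (if rht ℓ m D z p q ≤ 2 then (1 : ℝ) else 0) ≤
      gaussAlpha - gaussBeta / 4 ∧
    gaussAlpha + gaussBeta / 4 ≤
      (1 / ((m : ℝ) * 2 ^ ℓ)) * ∑ p, ∑ q, (if rht ℓ m D z p q ≤ 4 then (1 : ℝ) else 0)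

lemma gaussBeta_pos : 0 < gaussBeta := gaussianPDFReal_pos 0 1 4 one_ne_zero

lemma RhtCdfBounds.pos {D : Fin m → Fin (2 ^ ℓ) → ℝ} (hD : RhtCdfBounds ℓ m D) : 0 < m := by
  obtain ⟨-, h⟩ := hD (EuclideanSpace.single 0 1) (by simp)
  by_contra! hm
  obtain rfl : m = 0 := by omega
  have hα : 0 ≤ gaussAlpha := ENNReal.toReal_nonneg
  simp only [Nat.cast_zero, zero_mul, div_zero, zero_mul] at h
  linarith [gaussBeta_pos]

lemma measureReal_quant_rht_sub_notMem_Icc_le {D : Fin m → Fin (2 ^ ℓ) → ℝ}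
    (hD : RhtCdfBounds ℓ m D) (x y : EuclideanSpace ℝ (Fin (2 ^ ℓ))) (k : ℕ) :
    (indexMeasure ℓ m k).real {L | quant gaussAlpha
        (fun p => rht ℓ m D x (L p).1 (L p).2 - rht ℓ m D y (L p).1 (L p).2) ∉
          Set.Icc (2 * ‖x - y‖) (4 * ‖x - y‖)} ≤ 2 * exp (-k * gaussBeta ^ 2 / 8) := by
  have := isProbabilityMeasure_unifIndex ℓ hD.pos
  rcases eq_or_ne x y with rfl | hxy
  · simp only [sub_self, quant_zero, norm_zero, mul_zero, Set.Icc_self, Set.mem_singleton_iff,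
      not_true_eq_false, Set.ofPred_false, measureReal_empty]
    positivity
  set c := ‖x - y‖
  have hc : 0 < c := norm_pos_iff.mpr (sub_ne_zero.mpr hxy)
  set z := c⁻¹ • (x - y)
  have hdiff : ∀ j q, rht ℓ m D x j q - rht ℓ m D y j q = c * rht ℓ m D z j q := fun j q => by
    rw [← rht_sub, ← rht_smul, smul_inv_smul₀ hc.ne']
  obtain ⟨h₂, h₄⟩ := hD z (norm_smul_inv_norm (sub_ne_zero.mpr hxy))
  simp_rw [hdiff, quant_const_mul hc, Set.mem_Icc, mul_comm _ c, mul_le_mul_iff_right₀ hc]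
  have key := measureReal_pi_quant_notMem_Icc_le (ν := unifIndex ℓ m)
    (v := fun ω => rht ℓ m D z ω.1 ω.2) (s₁ := 2) (s₂ := 4) (measurable_of_countable _)
    gaussBeta_pos.le (by rwa [measureReal_unifIndex_setOf]) (by rwa [measureReal_unifIndex_setOf]) k
  simpa only [indexMeasure, Set.mem_Icc] using key

end RandomizedHadamard

lemma natCast_mul_two_mul_exp_le {n : ℕ} {b δ k : ℝ} (hb : 0 < b) (hδ0 : 0 < δ) (hδ : δ < 1 / 2)
    (hk : 32 * b⁻¹ ^ 2 * (log n + log (1 / δ)) ≤ k) :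
    n * (2 * exp (-k * b ^ 2 / 8)) ≤ δ / 4 := by
  rcases Nat.eq_zero_or_pos n with rfl | hn
  · simp only [Nat.cast_zero, zero_mul]
    positivity
  have hn' : (0 : ℝ) < n := Nat.cast_pos.mpr hn
  have hlogn : 0 ≤ log n := log_natCast_nonneg n
  have hlog2 : log 2 ≤ log (1 / δ) := log_le_log (by norm_num) (by rw [le_div_iff₀ hδ0]; linarith)
  have hlog8 : log 8 = 3 * log 2 := by
    rw [show (8 : ℝ) = 2 ^ 3 by norm_num, log_pow]
    norm_num
  have hkb : 32 * (log n + log (1 / δ)) ≤ k * b ^ 2 := by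
    calc 32 * (log n + log (1 / δ)) = 32 * b⁻¹ ^ 2 * (log n + log (1 / δ)) * b ^ 2 := by
          field_simp
      _ ≤ k * b ^ 2 := by gcongr
  have hexp : exp (-k * b ^ 2 / 8) ≤ δ / (8 * n) := by
    rw [show δ / (8 * n) = exp (-log (8 * n * (1 / δ))) by
      rw [exp_neg, exp_log (by positivity)]
      field_simp]
    gcongr
    rw [log_mul (by positivity) (by positivity), log_mul (by norm_num) hn'.ne', hlog8]
    linarith
  calc (n : ℝ) * (2 * exp (-k * b ^ 2 / 8)) ≤ n * (2 * (δ / (8 * n))) := by gcongr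
    _ = δ / 4 := by field_simp; ring

/-- Claim 5.3: for every fixed realization of the diagonals
satisfying the empirical-CDF bounds, the subsampled quantiles estimate all `n`
distances up to a factor in `[2,4]`, with high probability over the indices. -/
theorem quantile_truncation_estimate :
    ∃ C : ℝ, 0 < C ∧
      ∀ (ℓ m : ℕ) (δ : ℝ), δ ∈ Set.Ioo (0 : ℝ) (1 / 2) →
        ∀ (n : ℕ) (x : EuclideanSpace ℝ (Fin (2 ^ ℓ)))
          (xs : Fin n → EuclideanSpace ℝ (Fin (2 ^ ℓ))) (D : Fin m → Fin (2 ^ ℓ) → ℝ),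
          (∀ z : EuclideanSpace ℝ (Fin (2 ^ ℓ)), ‖z‖ = 1 →
            (1 / ((m : ℝ) * 2 ^ ℓ)) *
                ∑ p, ∑ q, (if rht ℓ m D z p q ≤ 2 then (1 : ℝ) else 0) ≤
              gaussAlpha - gaussBeta / 4 ∧
            gaussAlpha + gaussBeta / 4 ≤
              (1 / ((m : ℝ) * 2 ^ ℓ)) *
                ∑ p, ∑ q, (if rht ℓ m D z p q ≤ 4 then (1 : ℝ) else 0)) →
          ∀ k : ℕ, C * gaussBeta⁻¹ ^ 2 * (Real.log n + Real.log (1 / δ)) ≤ (k : ℝ) →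
            ENNReal.ofReal (1 - δ / 4) ≤
              indexMeasure ℓ m k
                {L | ∀ i : Fin n,
                  2 * ‖x - xs i‖ ≤
                      quant gaussAlpha (fun p : Fin k =>
                        rht ℓ m D x (L p).1 (L p).2 - rht ℓ m D (xs i) (L p).1 (L p).2) ∧
                    quant gaussAlpha (fun p : Fin k =>
                        rht ℓ m D x (L p).1 (L p).2 - rht ℓ m D (xs i) (L p).1 (L p).2) ≤
                      4 * ‖x - xs i‖} := by
  refine ⟨32, by norm_num, fun ℓ m δ ⟨hδ0, hδ⟩ n x xs D hD k hk => ?_⟩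
  have := isProbabilityMeasure_indexMeasure ℓ k (RhtCdfBounds.pos hD)
  set B := ⋃ i, {L : Fin k → Fin m × Fin (2 ^ ℓ) | quant gaussAlpha
    (fun p => rht ℓ m D x (L p).1 (L p).2 - rht ℓ m D (xs i) (L p).1 (L p).2) ∉
      Set.Icc (2 * ‖x - xs i‖) (4 * ‖x - xs i‖)}
  have hB : (indexMeasure ℓ m k).real B ≤ δ / 4 := calc
    _ ≤ ∑ i : Fin n, 2 * exp (-k * gaussBeta ^ 2 / 8) := (measureReal_iUnion_fintype_le _).trans
        (sum_le_sum fun i _ => measureReal_quant_rht_sub_notMem_Icc_le hD x (xs i) k)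
    _ ≤ δ / 4 := by
        rw [sum_const, card_univ, Fintype.card_fin, nsmul_eq_mul]
        exact natCast_mul_two_mul_exp_le gaussBeta_pos hδ0 hδ hk
  calc ENNReal.ofReal (1 - δ / 4) ≤ ENNReal.ofReal ((indexMeasure ℓ m k).real Bᶜ) := by
        rw [probReal_compl_eq_one_sub (Set.to_countable B).measurableSet]
        exact ENNReal.ofReal_le_ofReal (by linarith)
    _ = _ := by
        rw [ofReal_measureReal]
        congr 1
        ext L
        simp [B, Set.mem_Icc]
end
end
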